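/- arXiv:1312.5598 — 3 statements merged into one kernel-verified Lean document; each statement's English description precedes it below -/
import Mathlib

section
/- Let G = (V,E) be a finite simple undirected connected graph. Then ν̂_G, the maximum of v_G(T) over all subsets T ⊆ V, equals the maximum of v_G(S) over all independent sets S ⊆ V (the empty set included). -/
/-!
Removing from `T` its vertices that have a neighbour in `T` leaves an independent set
`S = T \ N(T)`. This loses the `|T ∩ N(T)|` vertices of `T ∩ N(T)`, but `N(S)` avoids `T`
altogether, so `N(S) ⊆ N(T) \ T` loses at least as many neighbours: `v(S) ≥ v(T)`.
-/

open Finset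

variable {V : Type*}

/-- `N(T)`: the set of vertices adjacent to at least one vertex of `T`. -/
def nbhd [Fintype V] [DecidableEq V] (G : SimpleGraph V) [DecidableRel G.Adj]
    (T : Finset V) : Finset V :=
  Finset.univ.filter fun j => ∃ i ∈ T, G.Adj i j

/-- The vulnerability function `v_G(T) = |T| - |N(T)|`. -/
def vuln [Fintype V] [DecidableEq V] (G : SimpleGraph V) [DecidableRel G.Adj]
    (T : Finset V) : ℤ :=
  (T.card : ℤ) - ((nbhd G T).card : ℤ)

/-- `S` is an independent set of `G`. -/
def IsIndepF (G : SimpleGraph V) (S : Finset V) : Prop :=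
  ∀ i ∈ S, ∀ j ∈ S, ¬ G.Adj i j

section

variable [Fintype V] [DecidableEq V] (G : SimpleGraph V) [DecidableRel G.Adj]

@[simp]
lemma mem_nbhd {T : Finset V} {j : V} : j ∈ nbhd G T ↔ ∃ i ∈ T, G.Adj i j := by
  simp [nbhd]

lemma nbhd_mono {S T : Finset V} (h : S ⊆ T) : nbhd G S ⊆ nbhd G T := by
  intro j hj
  obtain ⟨i, hi, hij⟩ := (mem_nbhd G).1 hj
  exact (mem_nbhd G).2 ⟨i, h hi, hij⟩

lemma disjoint_nbhd_sdiff_nbhd (T : Finset V) : Disjoint (nbhd G (T \ nbhd G T)) T := by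
  refine Finset.disjoint_left.2 fun j hj hjT => ?_
  obtain ⟨i, hi, hij⟩ := (mem_nbhd G).1 hj
  exact (Finset.mem_sdiff.1 hi).2 ((mem_nbhd G).2 ⟨j, hjT, hij.symm⟩)

lemma isIndepF_sdiff_nbhd (T : Finset V) : IsIndepF G (T \ nbhd G T) := fun i hi _ hj hij =>
  (disjoint_nbhd_sdiff_nbhd G T).forall_ne_finset ((mem_nbhd G).2 ⟨i, hi, hij⟩)
    (Finset.mem_sdiff.1 hj).1 rfl

lemma vuln_le_vuln_sdiff_nbhd (T : Finset V) : vuln G T ≤ vuln G (T \ nbhd G T) := by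
  set S := T \ nbhd G T
  have hcardS : S.card + (T ∩ nbhd G T).card = T.card := Finset.card_sdiff_add_card_inter _ _
  have hcardN : (nbhd G S).card + (T ∩ nbhd G T).card ≤ (nbhd G T).card := by
    rw [← Finset.card_union_of_disjoint
      ((disjoint_nbhd_sdiff_nbhd G T).mono_right Finset.inter_subset_left)]
    exact Finset.card_le_card
      (Finset.union_subset (nbhd_mono G Finset.sdiff_subset) Finset.inter_subset_right)
  simp only [vuln]
  omega

end

theorem weakVulnerability_eq_max_over_indepSets_general
    [Fintype V] [DecidableEq V] (G : SimpleGraph V) [DecidableRel G.Adj]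
    (nuHat : ℤ)
    (hHat : IsGreatest {x : ℤ | ∃ T : Finset V, vuln G T = x} nuHat) :
    IsGreatest {x : ℤ | ∃ S : Finset V, IsIndepF G S ∧ vuln G S = x} nuHat := by
  obtain ⟨⟨T, rfl⟩, hub⟩ := hHat
  refine ⟨⟨T \ nbhd G T, isIndepF_sdiff_nbhd G T,
    le_antisymm (hub ⟨_, rfl⟩) (vuln_le_vuln_sdiff_nbhd G T)⟩, ?_⟩
  rintro _ ⟨S, -, rfl⟩
  exact hub ⟨S, rfl⟩

/-- For a finite simple undirected connected graph `G`,
`ν̂_G`, the maximum of `v_G(T)` over all subsets `T ⊆ V`, equals the maximum of `v_G(S)`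
over all independent sets `S ⊆ V` (the empty set included). -/
theorem weakVulnerability_eq_max_over_indepSets
    [Fintype V] [DecidableEq V] (G : SimpleGraph V) [DecidableRel G.Adj]
    (hconn : G.Connected) (nuHat : ℤ)
    (hHat : IsGreatest {x : ℤ | ∃ T : Finset V, vuln G T = x} nuHat) :
    IsGreatest {x : ℤ | ∃ S : Finset V, IsIndepF G S ∧ vuln G S = x} nuHat :=
  weakVulnerability_eq_max_over_indepSets_general G nuHat hHat
end

section
/- Let G = (V,E) be a finite simple undirected connected graph with at least two vertices and let n = |V|. For each i ∈ V, the Shapley value of i in the coalitional game (V, q_G) equals φq_i = -1 - 1/(1 + d_i) + Σ_{j adjacent to i} 1/((1 + d_j) d_j), where d_j is the degree of vertex j. That is, (1/n!) · Σ over all orderings L of V of (q_G(T_L(i) ∪ {i}) - q_G(T_L(i))) = -1 - 1/(1+d_i) + Σ_{j ∈ N({i})} 1/((1+d_j)d_j), where T_L(i) is the set of vertices preceding i in the ordering L. -/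
/-!
Adding `i` to a coalition `T ∌ i` raises `|T|` by one, removes `i` itself from `S(T)` exactly
when all neighbours of `i` lie in `T`, and adds a neighbour `j` of `i` to `S` exactly when
`N(j) ⊆ T ∪ {i}` but `j ∉ T`; no other vertex changes status. Relative to an ordering with
`T = T_L(i)`, these events say that `i` comes last in `N(i) ∪ {i}`, respectively last in `N(j)`
but not in `N(j) ∪ {j}`. Swapping two elements of a set `S` is a bijection of orderings, so each element of
`S` comes last in exactly `n!/|S|` orderings, which gives the probabilities `1/(d_i + 1)` and
`1/d_j - 1/(d_j + 1)`.
-/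

open Finset

variable {V : Type*}

/-- `B(T) = {i ∈ V : N({i}) ⊆ T}`: the set of vertices all of whose neighbors lie in `T`. -/
def bset [Fintype V] [DecidableEq V] (G : SimpleGraph V) [DecidableRel G.Adj]
    (T : Finset V) : Finset V :=
  Finset.univ.filter fun i => ∀ j, G.Adj i j → j ∈ T

/-- `S(T) = B(T) \ T`. -/
def sset [Fintype V] [DecidableEq V] (G : SimpleGraph V) [DecidableRel G.Adj]
    (T : Finset V) : Finset V :=
  bset G T \ T

/-- The power function `q_G(T) = |S(T)| - |T|`. -/
def powerQ [Fintype V] [DecidableEq V] (G : SimpleGraph V) [DecidableRel G.Adj]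
    (T : Finset V) : ℤ :=
  ((sset G T).card : ℤ) - (T.card : ℤ)

/-- `T_L(i)`: the set of vertices preceding `i` in the ordering `L` of the vertices. -/
def precSet [Fintype V] [DecidableEq V] (L : V ≃ Fin (Fintype.card V)) (i : V) : Finset V :=
  Finset.univ.filter fun k => L k < L i

section

variable [Fintype V] [DecidableEq V]

section Graph

variable (G : SimpleGraph V) [DecidableRel G.Adj]

lemma mem_sset {T : Finset V} {j : V} : j ∈ sset G T ↔ G.neighborFinset j ⊆ T ∧ j ∉ T := by
  simp [sset, bset, subset_iff]

lemma sset_erase_eq_sdiff_neighborFinset {T : Finset V} {i : V} (hi : i ∉ T) :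
    (sset G T).erase i = sset G (insert i T) \ G.neighborFinset i := by
  ext j
  simp only [mem_erase, mem_sdiff, mem_sset, mem_insert, not_or, SimpleGraph.mem_neighborFinset]
  constructor
  · rintro ⟨hji, hN, hjT⟩
    exact ⟨⟨hN.trans (subset_insert _ _), hji, hjT⟩,
      fun hij => hi (hN ((G.mem_neighborFinset j i).2 hij.symm))⟩
  · rintro ⟨⟨hN, hji, hjT⟩, hij⟩
    refine ⟨hji, fun a ha => ?_, hjT⟩
    have hai : a ≠ i := by rintro rfl; exact hij ((G.mem_neighborFinset j a).1 ha).symm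
    simpa [hai] using hN ha

lemma card_sset_insert {T : Finset V} {i : V} (hi : i ∉ T) :
    ((sset G (insert i T)).card : ℤ) =
      (sset G T).card - (if G.neighborFinset i ⊆ T then 1 else 0) +
        ∑ j ∈ G.neighborFinset i, if j ∈ sset G (insert i T) then 1 else 0 := by
  have hiS : i ∈ sset G T ↔ G.neighborFinset i ⊆ T := by simp [mem_sset, hi]
  rw [sum_boole, filter_mem_eq_inter, inter_comm,
    ← card_sdiff_add_card_inter _ (G.neighborFinset i), ← sset_erase_eq_sdiff_neighborFinset G hi]
  by_cases h : i ∈ sset G T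
  · rw [if_pos (hiS.1 h), card_erase_of_mem h, Nat.cast_add, Nat.cast_sub (card_pos.2 ⟨i, h⟩)]
    ring
  · rw [if_neg (mt hiS.2 h), erase_eq_of_notMem h, Nat.cast_add]
    ring

lemma powerQ_insert_sub_powerQ {T : Finset V} {i : V} (hi : i ∉ T) :
    powerQ G (insert i T) - powerQ G T =
      -1 - (if insert i (G.neighborFinset i) ⊆ insert i T then 1 else 0) +
        ∑ j ∈ G.neighborFinset i,
          ((if G.neighborFinset j ⊆ insert i T then 1 else 0) -
            if insert j (G.neighborFinset j) ⊆ insert i T then 1 else 0) := by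
  have hj : ∀ j, (if j ∈ sset G (insert i T) then (1 : ℤ) else 0) =
      (if G.neighborFinset j ⊆ insert i T then 1 else 0) -
        if insert j (G.neighborFinset j) ⊆ insert i T then 1 else 0 := by
    intro j
    simp only [mem_sset, insert_subset_iff]
    split_ifs <;> simp_all
  simp only [insert_subset_insert_iff (G.notMem_neighborFinset_self i)]
  rw [powerQ, powerQ, card_sset_insert G hi, card_insert_of_notMem hi, sum_congr rfl fun j _ => hj j]
  push_cast
  ring

end Graph

lemma card_filter_forall_le_mul_card {α : Type*} [Fintype α] [LinearOrder α] {S : Finset V}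
    {x : V} (hx : x ∈ S) :
    #{L : V ≃ α | ∀ a ∈ S, L a ≤ L x} * #S = Fintype.card (V ≃ α) := by
  have hsymm : ∀ y ∈ S,
      #{L : V ≃ α | ∀ a ∈ S, L a ≤ L y} = #{L : V ≃ α | ∀ a ∈ S, L a ≤ L x} := by
    intro y hy
    have hS : ∀ a ∈ S, Equiv.swap x y a ∈ S := fun a ha => by
      rw [Equiv.swap_apply_def]; split_ifs <;> assumption
    refine card_equiv (Equiv.equivCongr (Equiv.swap x y) (Equiv.refl α)) fun L => ?_
    simp only [mem_filter, mem_univ, true_and, Equiv.equivCongr_apply_apply, Equiv.symm_swap,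
      Equiv.refl_apply, Equiv.swap_apply_left]
    constructor
    · intro h a ha
      exact h _ (hS a ha)
    · intro h a ha
      simpa using h _ (hS a ha)
  have hdisj : (S : Set V).PairwiseDisjoint fun y =>
      ({L : V ≃ α | ∀ a ∈ S, L a ≤ L y} : Finset (V ≃ α)) := by
    intro y hy z hz hyz
    simp only [Function.onFun, disjoint_left, mem_filter, mem_univ, true_and]
    exact fun L hLy hLz => hyz (L.injective (le_antisymm (hLz y hy) (hLy z hz)))
  have hcover :
      S.biUnion (fun y => ({L : V ≃ α | ∀ a ∈ S, L a ≤ L y} : Finset (V ≃ α))) = univ := by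
    refine eq_univ_of_forall fun L => ?_
    obtain ⟨y, hy, hmax⟩ := S.exists_max_image L ⟨x, hx⟩
    exact mem_biUnion.2 ⟨y, hy, by simpa using hmax⟩
  calc #{L : V ≃ α | ∀ a ∈ S, L a ≤ L x} * #S
      = ∑ y ∈ S, #{L : V ≃ α | ∀ a ∈ S, L a ≤ L y} := by
        rw [sum_congr rfl hsymm, sum_const, smul_eq_mul, mul_comm]
    _ = Fintype.card (V ≃ α) := by rw [← card_biUnion hdisj, hcover, card_univ]

lemma notMem_precSet (L : V ≃ Fin (Fintype.card V)) (i : V) : i ∉ precSet L i := by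
  simp [precSet]

lemma subset_insert_precSet_iff (L : V ≃ Fin (Fintype.card V)) (S : Finset V) (i : V) :
    S ⊆ insert i (precSet L i) ↔ ∀ a ∈ S, L a ≤ L i := by
  rw [subset_iff]
  refine forall₂_congr fun a _ => ?_
  rw [mem_insert, precSet, mem_filter, le_iff_lt_or_eq, L.injective.eq_iff]
  simp only [mem_univ, true_and, or_comm]

lemma sum_ite_forall_le_eq_factorial_div {S : Finset V} {x : V} (hx : x ∈ S) :
    ∑ L : V ≃ Fin (Fintype.card V), (if ∀ a ∈ S, L a ≤ L x then (1 : ℝ) else 0) =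
      (Fintype.card V).factorial / #S := by
  rw [sum_boole, eq_div_iff (Nat.cast_ne_zero.2 (card_pos.2 ⟨x, hx⟩).ne'), ← Nat.cast_mul,
    card_filter_forall_le_mul_card hx, Fintype.card_equiv (Fintype.equivFin V)]

lemma sum_ite_forall_le_sub_insert_eq {S : Finset V} {x y : V} (hx : x ∈ S) (hy : y ∉ S) :
    ∑ L : V ≃ Fin (Fintype.card V),
        ((if ∀ a ∈ S, L a ≤ L x then (1 : ℝ) else 0) -
          if ∀ a ∈ insert y S, L a ≤ L x then 1 else 0) =
      (Fintype.card V).factorial / ((#S + 1) * #S) := by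
  have hS : (#S : ℝ) ≠ 0 := Nat.cast_ne_zero.2 (card_pos.2 ⟨x, hx⟩).ne'
  rw [sum_sub_distrib, sum_ite_forall_le_eq_factorial_div hx,
    sum_ite_forall_le_eq_factorial_div (mem_insert_of_mem hx), card_insert_of_notMem hy]
  push_cast
  field_simp
  ring

lemma powerQ_marginal_eq (G : SimpleGraph V) [DecidableRel G.Adj]
    (L : V ≃ Fin (Fintype.card V)) (i : V) :
    (powerQ G (precSet L i ∪ {i}) : ℝ) - powerQ G (precSet L i) =
      -1 - (if ∀ a ∈ insert i (G.neighborFinset i), L a ≤ L i then 1 else 0) +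
        ∑ j ∈ G.neighborFinset i,
          ((if ∀ a ∈ G.neighborFinset j, L a ≤ L i then 1 else 0) -
            if ∀ a ∈ insert j (G.neighborFinset j), L a ≤ L i then 1 else 0) := by
  have h := powerQ_insert_sub_powerQ G (notMem_precSet L i)
  simp only [subset_insert_precSet_iff] at h
  rw [union_singleton]
  exact_mod_cast h

end

theorem shapley_powerQ_general
    [Fintype V] [DecidableEq V] (G : SimpleGraph V) [DecidableRel G.Adj]
    (i : V) :
    (1 / ((Fintype.card V).factorial : ℝ)) *
        ∑ L : V ≃ Fin (Fintype.card V),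
          ((powerQ G (precSet L i ∪ {i}) : ℝ) - (powerQ G (precSet L i) : ℝ)) =
      -1 - 1 / (1 + (G.degree i : ℝ)) +
        ∑ j ∈ G.neighborFinset i, (1 : ℝ) / ((1 + (G.degree j : ℝ)) * (G.degree j : ℝ)) := by
  have hnbr : ∀ j ∈ G.neighborFinset i, i ∈ G.neighborFinset j := fun j hj => by
    simpa [SimpleGraph.adj_comm] using hj
  have hpair : ∀ j ∈ G.neighborFinset i,
      ∑ L : V ≃ Fin (Fintype.card V),
        ((if ∀ a ∈ G.neighborFinset j, L a ≤ L i then (1 : ℝ) else 0) -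
          if ∀ a ∈ insert j (G.neighborFinset j), L a ≤ L i then 1 else 0) =
        (Fintype.card V).factorial / ((G.degree j + 1) * G.degree j) := fun j hj => by
    rw [sum_ite_forall_le_sub_insert_eq (hnbr j hj) (G.notMem_neighborFinset_self j),
      G.card_neighborFinset_eq_degree]
  rw [sum_congr rfl fun L _ => powerQ_marginal_eq G L i, sum_add_distrib, sum_sub_distrib,
    sum_comm, sum_congr rfl hpair, sum_ite_forall_le_eq_factorial_div (mem_insert_self i _),
    card_insert_of_notMem (G.notMem_neighborFinset_self i), G.card_neighborFinset_eq_degree,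
    sum_const, card_univ, Fintype.card_equiv (Fintype.equivFin V), mul_add, mul_sub, mul_sum]
  refine congrArg₂ _ (by push_cast; field_simp; ring) (sum_congr rfl fun j hj => ?_)
  have hdeg : (G.degree j : ℝ) ≠ 0 := Nat.cast_ne_zero.2 (card_pos.2 ⟨i, hnbr j hj⟩).ne'
  field_simp
  ring

/-- Let `G` be a finite simple undirected connected graph with at least two vertices and
`n = |V|`. For each vertex `i`, the Shapley value of `i` in the coalitional game `(V, q_G)`
equals `φq_i = -1 - 1/(1 + d_i) + Σ_{j adjacent to i} 1/((1 + d_j) d_j)`. -/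
theorem shapley_powerQ
    [Fintype V] [DecidableEq V] (G : SimpleGraph V) [DecidableRel G.Adj]
    (hconn : G.Connected) (hcard : 2 ≤ Fintype.card V) (i : V) :
    (1 / ((Fintype.card V).factorial : ℝ)) *
        ∑ L : V ≃ Fin (Fintype.card V),
          ((powerQ G (precSet L i ∪ {i}) : ℝ) - (powerQ G (precSet L i) : ℝ)) =
      -1 - 1 / (1 + (G.degree i : ℝ)) +
        ∑ j ∈ G.neighborFinset i, (1 : ℝ) / ((1 + (G.degree j : ℝ)) * (G.degree j : ℝ)) :=
  shapley_powerQ_general G i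
end

section
/- Let G = (V,E) be a finite simple undirected graph with n = |V|. For every i ∈ V, the Shapley value of i in the coalitional game (V, v_G) is the negative of the Shapley value of i in the game (V, p_G): (1/n!) · Σ over all orderings L of V of (v_G(T_L(i) ∪ {i}) - v_G(T_L(i))) = -(1/n!) · Σ over all orderings L of V of (p_G(T_L(i) ∪ {i}) - p_G(T_L(i))). -/
/-!
Reversing an ordering `L` exchanges the coalitions `T_L(i)` and `T_L(i) ∪ {i}` with the
complements of `T_L(i) ∪ {i}` and `T_L(i)`, so the Shapley value of the game `T ↦ w(Tᶜ)` is the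
negative of that of `w`. Since `B(T)` is the complement of `N(Tᶜ)`, the power function is
`p_G(T) = v_G(Tᶜ)`.
-/

open Finset

variable {V : Type*}

/-- The power function `p_G(T) = |B(T)| - |T|`. -/
def powerP [Fintype V] [DecidableEq V] (G : SimpleGraph V) [DecidableRel G.Adj]
    (T : Finset V) : ℤ :=
  ((bset G T).card : ℤ) - (T.card : ℤ)

section Graph

variable [Fintype V] [DecidableEq V] (G : SimpleGraph V) [DecidableRel G.Adj]

lemma bset_eq_compl_nbhd_compl (T : Finset V) : bset G T = (nbhd G Tᶜ)ᶜ := by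
  ext x
  simp only [bset, nbhd, mem_filter, mem_univ, true_and, mem_compl, not_exists, not_and]
  exact forall_congr' fun j => by rw [G.adj_comm]; tauto

lemma powerP_eq_vuln_compl (T : Finset V) : powerP G T = vuln G Tᶜ := by
  have hB : (bset G T).card + (nbhd G Tᶜ).card = Fintype.card V := by
    rw [bset_eq_compl_nbhd_compl]; exact card_compl_add_card _
  have hT : Tᶜ.card + T.card = Fintype.card V := card_compl_add_card _
  unfold powerP vuln
  omega

end Graph

section Orderings

variable [Fintype V]

lemma trans_revPerm_involutive :
    Function.Involutive fun L : V ≃ Fin (Fintype.card V) => L.trans Fin.revPerm := by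
  intro L; ext k; simp

variable [DecidableEq V]

lemma precSet_trans_revPerm (L : V ≃ Fin (Fintype.card V)) (i : V) :
    precSet (L.trans Fin.revPerm) i = (precSet L i ∪ {i})ᶜ := by
  ext k
  have hk : k = i ↔ L k = L i := L.injective.eq_iff.symm
  simp only [precSet, mem_filter, mem_univ, true_and, mem_compl, mem_union, mem_singleton,
    Equiv.trans_apply, Fin.revPerm_apply, hk, Fin.lt_def, Fin.val_rev, Fin.ext_iff]
  omega

lemma precSet_trans_revPerm_union (L : V ≃ Fin (Fintype.card V)) (i : V) :
    precSet (L.trans Fin.revPerm) i ∪ {i} = (precSet L i)ᶜ := by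
  have hi : i ∉ precSet L i := by simp [precSet]
  ext k
  by_cases hk : k = i
  · simp [precSet_trans_revPerm, hk, hi]
  · simp [precSet_trans_revPerm, hk]

theorem sum_marginal_compl_eq_neg {M : Type*} [AddCommGroup M] (w : Finset V → M) (i : V) :
    ∑ L : V ≃ Fin (Fintype.card V), (w (precSet L i ∪ {i})ᶜ - w (precSet L i)ᶜ) =
      -∑ L : V ≃ Fin (Fintype.card V), (w (precSet L i ∪ {i}) - w (precSet L i)) := by
  rw [← Equiv.sum_comp (trans_revPerm_involutive.toPerm _), ← sum_neg_distrib]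
  refine sum_congr rfl fun L _ => ?_
  rw [Function.Involutive.coe_toPerm, precSet_trans_revPerm_union, precSet_trans_revPerm,
    compl_compl, compl_compl, neg_sub]

end Orderings

/-- For a finite simple undirected graph `G` and every vertex `i`, the Shapley value of `i`
in the coalitional game `(V, v_G)` is the negative of the Shapley value of `i` in the game
`(V, p_G)`. -/
theorem shapley_vuln_eq_neg_shapley_powerP
    [Fintype V] [DecidableEq V] (G : SimpleGraph V) [DecidableRel G.Adj] (i : V) :
    (1 / ((Fintype.card V).factorial : ℝ)) *
        ∑ L : V ≃ Fin (Fintype.card V),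
          ((vuln G (precSet L i ∪ {i}) : ℝ) - (vuln G (precSet L i) : ℝ)) =
      -((1 / ((Fintype.card V).factorial : ℝ)) *
        ∑ L : V ≃ Fin (Fintype.card V),
          ((powerP G (precSet L i ∪ {i}) : ℝ) - (powerP G (precSet L i) : ℝ))) := by
  simp only [powerP_eq_vuln_compl]
  rw [sum_marginal_compl_eq_neg (fun T => (vuln G T : ℝ)) i]
  ring
end
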